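/- Let A be an n×n nonnegative real matrix whose row sums r_1(A),…,r_n(A) are all nonzero. Then for any integers L > 0 and k ≥ 0, min_{1≤i≤n} ( r_i(A^{k+L}) / r_i(A^k) )^{1/L} ≤ ρ(A) ≤ max_{1≤i≤n} ( r_i(A^{k+L}) / r_i(A^k) )^{1/L}. -/

import Mathlib

open Matrix

/-- The spectral radius of a real square matrix: the maximum modulus of its
complex eigenvalues (elements of the spectrum of the matrix over `ℂ`). -/
noncomputable def specRad {n : ℕ} (A : Matrix (Fin n) (Fin n) ℝ) : ℝ :=
  sSup ((fun μ : ℂ => ‖μ‖) '' spectrum ℂ (A.map (fun x : ℝ => (x : ℂ))))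

/-- `rowSum A i` is the `i`-th row sum of `A`. -/
noncomputable def rowSum {n : ℕ} (A : Matrix (Fin n) (Fin n) ℝ) (i : Fin n) : ℝ :=
  ∑ j, A i j

/-- A square matrix is irreducible if it cannot be symmetrically permuted to a
nontrivial block upper-triangular form; equivalently, for every nonempty proper
subset `S` of indices there is a nonzero entry leading from `S` to its complement. -/
def IsIrred {n : ℕ} (A : Matrix (Fin n) (Fin n) ℝ) : Prop :=
  ∀ S : Set (Fin n), S.Nonempty → S ≠ Set.univ → ∃ i ∈ S, ∃ j ∈ Sᶜ, A i j ≠ 0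

/-!
With `x = A^k 1 > 0` and `D = diag x`, the nonnegative matrix `C = D⁻¹ A^L D` has the same
spectrum as `A^L` and its `i`-th row sum is `r_i(A^{k+L}) / r_i(A^k)`. For a nonnegative matrix
with row sums in `[m, M]`, the `ℓ∞` operator norm (maximal row sum) gives `ρ ≤ M`, and the row
sums of its `p`-th power are at least `m^p`, so Gelfand's formula gives `ρ ≥ m`. Finally
`ρ(A^L) = ρ(A)^L` by the spectral mapping theorem.
-/

attribute [local instance] Matrix.linftyOpNormedRing Matrix.linftyOpNormedAlgebra

open scoped ENNReal NNReal

namespace spectrum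

theorem spectralRadius_pow {𝕜 A : Type*} [NormedField 𝕜] [IsAlgClosed 𝕜] [Ring A]
    [Algebra 𝕜 A] (a : A) {n : ℕ} (hn : 0 < n) :
    spectralRadius 𝕜 (a ^ n) = spectralRadius 𝕜 a ^ n := by
  refine le_antisymm ?_ (spectralRadius_pow_le a n hn.ne')
  rw [spectralRadius, map_pow_of_pos a hn]
  refine iSup₂_le ?_
  rintro _ ⟨z, hz, rfl⟩
  rw [nnnorm_pow, ENNReal.coe_pow]
  exact pow_le_pow_left₀ bot_le (le_iSup₂ (f := fun z _ => (‖z‖₊ : ℝ≥0∞)) z hz) n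

theorem ofReal_le_spectralRadius_of_pow_le_norm {A : Type*} [NormedRing A] [NormedAlgebra ℂ A]
    [CompleteSpace A] (a : A) {m : ℝ} (hm : 0 ≤ m) (h : ∀ p : ℕ, m ^ p ≤ ‖a ^ p‖) :
    ENNReal.ofReal m ≤ spectralRadius ℂ a := by
  refine ge_of_tendsto (pow_norm_pow_one_div_tendsto_nhds_spectralRadius a) ?_
  filter_upwards [Filter.eventually_ne_atTop 0] with p hp
  refine ENNReal.ofReal_le_ofReal ?_
  calc m = (m ^ p) ^ (1 / p : ℝ) := by rw [one_div, Real.pow_rpow_inv_natCast hm hp]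
    _ ≤ ‖a ^ p‖ ^ (1 / p : ℝ) := by gcongr; exact h p

end spectrum

namespace Matrix

variable {ι : Type*} [Fintype ι] [DecidableEq ι]

theorem map_ofReal_pow (C : Matrix ι ι ℝ) (p : ℕ) :
    (C ^ p).map (fun x : ℝ => (x : ℂ)) = C.map (fun x : ℝ => (x : ℂ)) ^ p :=
  map_pow Complex.ofRealHom.mapMatrix C p

theorem linfty_opNorm_map_ofReal (C : Matrix ι ι ℝ) :
    ‖C.map (fun x : ℝ => (x : ℂ))‖ = ‖C‖ := by
  simp [linfty_opNorm_def]

theorem sum_apply_le_linfty_opNorm (C : Matrix ι ι ℝ) (i : ι) : ∑ j, C i j ≤ ‖C‖ := by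
  rw [linfty_opNorm_def]
  calc ∑ j, C i j ≤ ∑ j, ‖C i j‖ := Finset.sum_le_sum fun j _ => Real.le_norm_self _
    _ = ((∑ j, ‖C i j‖₊ : ℝ≥0) : ℝ) := by push_cast; rfl
    _ ≤ _ := by gcongr; exact Finset.le_sup (f := fun i => ∑ j, ‖C i j‖₊) (Finset.mem_univ i)

theorem linfty_opNorm_le_of_sum_apply_le {C : Matrix ι ι ℝ} (hC : ∀ i j, 0 ≤ C i j) {M : ℝ}
    (hM : 0 ≤ M) (h : ∀ i, ∑ j, C i j ≤ M) : ‖C‖ ≤ M := by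
  rw [linfty_opNorm_def, ← Real.coe_toNNReal M hM, NNReal.coe_le_coe]
  refine Finset.sup_le fun i _ => ?_
  rw [← NNReal.coe_le_coe, Real.coe_toNNReal M hM, NNReal.coe_sum]
  simpa [abs_of_nonneg (hC i _)] using h i

theorem pow_le_sum_pow_apply {C : Matrix ι ι ℝ} (hC : ∀ i j, 0 ≤ C i j) {m : ℝ} (hm : 0 ≤ m)
    (h : ∀ i, m ≤ ∑ j, C i j) (p : ℕ) (i : ι) : m ^ p ≤ ∑ j, (C ^ p) i j := by
  induction p generalizing i with
  | zero => simp [one_apply]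
  | succ p ih =>
    calc m ^ (p + 1) = m ^ p * m := pow_succ m p
      _ ≤ m ^ p * ∑ l, C i l := by gcongr; exact h i
      _ = ∑ l, C i l * m ^ p := by rw [Finset.mul_sum]; simp only [mul_comm]
      _ ≤ ∑ l, C i l * ∑ j, (C ^ p) l j := by gcongr with l; exacts [hC i l, ih l]
      _ = ∑ j, (C ^ (p + 1)) i j := by
        simp only [pow_succ', mul_apply, Finset.mul_sum]
        exact Finset.sum_comm

theorem spectralRadius_map_ofReal_le_of_sum_apply_le [Nonempty ι] {C : Matrix ι ι ℝ}
    (hC : ∀ i j, 0 ≤ C i j) {M : ℝ} (h : ∀ i, ∑ j, C i j ≤ M) :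
    spectralRadius ℂ (C.map (fun x : ℝ => (x : ℂ))) ≤ ENNReal.ofReal M := by
  have hM : 0 ≤ M := (Finset.sum_nonneg fun j _ => hC (Classical.arbitrary ι) j).trans (h _)
  refine (spectrum.spectralRadius_le_nnnorm _).trans ?_
  rw [← ENNReal.ofReal_coe_nnreal, coe_nnnorm, linfty_opNorm_map_ofReal]
  exact ENNReal.ofReal_le_ofReal (linfty_opNorm_le_of_sum_apply_le hC hM h)

theorem ofReal_le_spectralRadius_map_ofReal_of_le_sum_apply [Nonempty ι] {C : Matrix ι ι ℝ}
    (hC : ∀ i j, 0 ≤ C i j) {m : ℝ} (hm : 0 ≤ m) (h : ∀ i, m ≤ ∑ j, C i j) :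
    ENNReal.ofReal m ≤ spectralRadius ℂ (C.map (fun x : ℝ => (x : ℂ))) := by
  refine spectrum.ofReal_le_spectralRadius_of_pow_le_norm _ hm fun p => ?_
  obtain ⟨i⟩ := ‹Nonempty ι›
  rw [← map_ofReal_pow, linfty_opNorm_map_ofReal]
  exact (pow_le_sum_pow_apply hC hm h p i).trans (sum_apply_le_linfty_opNorm _ i)

theorem spectrum_map_ofReal_diagonal_conj (B : Matrix ι ι ℝ) {x : ι → ℝ} (hx : ∀ i, x i ≠ 0) :
    spectrum ℂ ((diagonal x⁻¹ * B * diagonal x).map (fun x : ℝ => (x : ℂ))) =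
      spectrum ℂ (B.map (fun x : ℝ => (x : ℂ))) := by
  let u : (ι → ℝ)ˣ := ⟨x, x⁻¹, by ext i; simp [hx], by ext i; simp [hx]⟩
  let U : (Matrix ι ι ℂ)ˣ := Units.map (Complex.ofRealHom.mapMatrix.comp (diagonalRingHom ι ℝ)) u
  convert spectrum.units_conjugate' (u := U) (a := B.map (fun x : ℝ => (x : ℂ))) using 2
  change Complex.ofRealHom.mapMatrix _ = _
  rw [map_mul, map_mul]
  rfl

theorem sum_diagonal_conj_apply (B : Matrix ι ι ℝ) (x : ι → ℝ) (i : ι) :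
    ∑ j, (diagonal x⁻¹ * B * diagonal x) i j = (B *ᵥ x) i / x i := by
  simp [mul_diagonal, diagonal_mul, mulVec, dotProduct, Finset.mul_sum, div_eq_inv_mul, mul_assoc]

end Matrix

theorem specRad_eq_toReal_spectralRadius {n : ℕ} [NeZero n] (A : Matrix (Fin n) (Fin n) ℝ) :
    specRad A = (spectralRadius ℂ (A.map (fun x : ℝ => (x : ℂ)))).toReal := by
  obtain ⟨z, hz, hρ⟩ := spectrum.exists_nnnorm_eq_spectralRadius (A.map (fun x : ℝ => (x : ℂ)))
  rw [← hρ, ENNReal.coe_toReal, coe_nnnorm]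
  refine IsGreatest.csSup_eq ⟨⟨z, hz, rfl⟩, ?_⟩
  rintro _ ⟨w, hw, rfl⟩
  have : (‖w‖₊ : ℝ≥0∞) ≤ ‖z‖₊ := hρ ▸ le_iSup₂ (f := fun z _ => (‖z‖₊ : ℝ≥0∞)) w hw
  exact_mod_cast this

theorem specRad_nonneg {n : ℕ} [NeZero n] (A : Matrix (Fin n) (Fin n) ℝ) : 0 ≤ specRad A := by
  rw [specRad_eq_toReal_spectralRadius]
  exact ENNReal.toReal_nonneg

theorem specRad_pow {n : ℕ} [NeZero n] (A : Matrix (Fin n) (Fin n) ℝ) {L : ℕ} (hL : 0 < L) :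
    specRad (A ^ L) = specRad A ^ L := by
  rw [specRad_eq_toReal_spectralRadius, specRad_eq_toReal_spectralRadius, ← ENNReal.toReal_pow,
    ← spectrum.spectralRadius_pow _ hL, map_ofReal_pow]

theorem le_specRad_of_le_rowSum {n : ℕ} [NeZero n] {C : Matrix (Fin n) (Fin n) ℝ}
    (hC : ∀ i j, 0 ≤ C i j) {m : ℝ} (hm : 0 ≤ m) (h : ∀ i, m ≤ rowSum C i) : m ≤ specRad C := by
  rw [specRad_eq_toReal_spectralRadius, ← ENNReal.ofReal_le_iff_le_toReal]
  · exact ofReal_le_spectralRadius_map_ofReal_of_le_sum_apply hC hm h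
  · exact ((spectrum.spectralRadius_le_nnnorm _).trans_lt ENNReal.coe_lt_top).ne

theorem specRad_le_of_rowSum_le {n : ℕ} [NeZero n] {C : Matrix (Fin n) (Fin n) ℝ}
    (hC : ∀ i j, 0 ≤ C i j) {M : ℝ} (h : ∀ i, rowSum C i ≤ M) : specRad C ≤ M := by
  have hM : 0 ≤ M := (Finset.sum_nonneg fun j _ => hC 0 j).trans (h 0)
  rw [specRad_eq_toReal_spectralRadius]
  exact ENNReal.toReal_le_of_le_ofReal hM (spectralRadius_map_ofReal_le_of_sum_apply_le hC h)

theorem rowSum_pow_add {n : ℕ} (A : Matrix (Fin n) (Fin n) ℝ) (p q : ℕ) (i : Fin n) :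
    rowSum (A ^ (p + q)) i = (A ^ p *ᵥ rowSum (A ^ q)) i := by
  simp only [rowSum, pow_add, mul_apply, mulVec, dotProduct, Finset.mul_sum]
  exact Finset.sum_comm

theorem rowSum_pow_pos {n : ℕ} {A : Matrix (Fin n) (Fin n) ℝ} (hA : ∀ i j, 0 ≤ A i j)
    (hr : ∀ i, rowSum A i ≠ 0) (p : ℕ) (i : Fin n) : 0 < rowSum (A ^ p) i := by
  induction p generalizing i with
  | zero => simp [rowSum, one_apply]
  | succ p ih =>
    obtain ⟨j, hj⟩ : ∃ j, 0 < A i j := by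
      by_contra! hA0
      exact hr i (Finset.sum_eq_zero fun j _ => le_antisymm (hA0 j) (hA i j))
    rw [add_comm, rowSum_pow_add, pow_one]
    exact Finset.sum_pos' (fun l _ => mul_nonneg (hA i l) (ih l).le)
      ⟨j, Finset.mem_univ j, mul_pos hj (ih j)⟩

/-- Theorem 4 of the paper, inequality part — Liu's bound.
For a nonnegative matrix `A` with all row sums nonzero and integers `L > 0`, `k ≥ 0`,
`min_i (r_i(A^{k+L})/r_i(A^k))^{1/L} ≤ ρ(A) ≤ max_i (r_i(A^{k+L})/r_i(A^k))^{1/L}`. -/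
theorem stmt3 {n : ℕ} [NeZero n] (A : Matrix (Fin n) (Fin n) ℝ)
    (hA : ∀ i j, 0 ≤ A i j) (hr : ∀ i, rowSum A i ≠ 0) (L k : ℕ) (hL : 0 < L) :
    Finset.univ.inf' Finset.univ_nonempty
        (fun i => (rowSum (A ^ (k + L)) i / rowSum (A ^ k) i) ^ ((L : ℝ))⁻¹) ≤ specRad A ∧
    specRad A ≤ Finset.univ.sup' Finset.univ_nonempty
        (fun i => (rowSum (A ^ (k + L)) i / rowSum (A ^ k) i) ^ ((L : ℝ))⁻¹) := by
  set ratio := fun i => rowSum (A ^ (k + L)) i / rowSum (A ^ k) i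
  have hx := rowSum_pow_pos hA hr k
  set C := diagonal (rowSum (A ^ k))⁻¹ * A ^ L * diagonal (rowSum (A ^ k))
  have hC : ∀ i j, 0 ≤ C i j := fun i j => by
    simpa [C, mul_diagonal, diagonal_mul] using
      mul_nonneg (mul_nonneg (inv_pos.2 (hx i)).le (pow_apply_nonneg hA L i j)) (hx j).le
  have hCsum : ∀ i, rowSum C i = ratio i := fun i => by
    rw [rowSum, sum_diagonal_conj_apply, ← rowSum_pow_add, add_comm]
  have hCρ : specRad C = specRad A ^ L := by
    rw [← specRad_pow A hL, specRad, spectrum_map_ofReal_diagonal_conj _ fun i => (hx i).ne',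
      specRad]
  have hratio : ∀ i, 0 ≤ ratio i := fun i => (div_pos (rowSum_pow_pos hA hr _ i) (hx i)).le
  have hL' : (0 : ℝ) < L := Nat.cast_pos.2 hL
  obtain ⟨i₀, hi₀⟩ := Finite.exists_min ratio
  obtain ⟨i₁, hi₁⟩ := Finite.exists_max ratio
  constructor
  · refine (Finset.inf'_le _ (Finset.mem_univ i₀)).trans ?_
    rw [Real.rpow_inv_le_iff_of_pos (hratio i₀) (specRad_nonneg A) hL', Real.rpow_natCast, ← hCρ]
    exact le_specRad_of_le_rowSum hC (hratio i₀) fun i => (hi₀ i).trans (hCsum i).ge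
  · refine le_trans ?_ (Finset.le_sup' _ (Finset.mem_univ i₁))
    rw [Real.le_rpow_inv_iff_of_pos (specRad_nonneg A) (hratio i₁) hL', Real.rpow_natCast, ← hCρ]
    exact specRad_le_of_rowSum_le hC fun i => (hCsum i).trans_le (hi₁ i)
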